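/- arXiv:0905.3247 — 3 statements merged into one kernel-verified Lean document; each statement's English description precedes it below -/
import Mathlib

section
/- Let f : ℝ → ℝ be smooth with f(t) = O(1+|t|) and f'(t) = O(1) uniformly on ℝ. For U ≥ e² and q ∈ ℝ, define the Gaussian average G(q) = (U/π)^{1/2} ∫_{-∞}^∞ e^{-U(x-q)²} f(x) dx. Then G(q) - f(q) = O((1+|q|)·U^{-1/2}·(log(e+|q|) + log U)^{1/2} · e^{-b²} + U^{-1/2}) where b = (log(e+|q|) + (1/2) log U)^{1/2}; in particular G(q) - f(q) = O(U^{-1/2}), with implied constants depending only on the bounds for f and f'. -/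
open MeasureTheory Real

lemma gauss_Ioi (b : ℝ) (hb : 0 < b) :
    ∫ x : ℝ in Set.Ioi 0, x * Real.exp (-b * x ^ 2) = (2 * b)⁻¹ := by
  have hb' : b ≠ 0 := ne_of_gt hb
  have A : ∀ x : ℝ, HasDerivAt (fun x => -(2 * b)⁻¹ * Real.exp (-b * x ^ 2))
      (x * Real.exp (-b * x ^ 2)) x := by
    intro x
    convert ((hasDerivAt_pow 2 x).const_mul (-b)).exp.const_mul (-(2 * b)⁻¹) using 1
    all_goals first | rfl | (push_cast; field_simp; done) | (field_simp; ring)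
    all_goals ring
  have B : Filter.Tendsto (fun y : ℝ ↦ -(2 * b)⁻¹ * Real.exp (-b * y ^ 2))
      Filter.atTop (nhds (-(2 * b)⁻¹ * 0)) := by
    refine Filter.Tendsto.const_mul _ ?_
    refine Real.tendsto_exp_atBot.comp ?_
    exact (Filter.tendsto_pow_atTop two_ne_zero).const_mul_atTop_of_neg (neg_lt_zero.2 hb)
  have := integral_Ioi_of_hasDerivAt_of_tendsto' (a := 0)
    (fun x _ => A x) (integrable_mul_exp_neg_mul_sq hb).integrableOn B
  simpa using this

lemma gauss_abs (b : ℝ) (hb : 0 < b) :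
    ∫ x : ℝ, |x| * Real.exp (-b * x ^ 2) = b⁻¹ := by
  have h0 := integral_comp_abs (f := fun t : ℝ => t * Real.exp (-b * t ^ 2))
  simp only [sq_abs] at h0
  rw [h0, gauss_Ioi b hb]
  field_simp

set_option maxHeartbeats 1000000 in
theorem stmt3 (C₁ C₂ : ℝ) :
    ∃ C > (0:ℝ), ∀ f : ℝ → ℝ, ContDiff ℝ (⊤ : ℕ∞) f →
      (∀ t, |f t| ≤ C₁ * (1 + |t|)) → (∀ t, |deriv f t| ≤ C₂) →
      ∀ U q : ℝ, Real.exp 2 ≤ U →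
        |Real.sqrt (U / π) * (∫ x : ℝ, Real.exp (-U * (x - q) ^ 2) * f x) - f q| ≤
          C * ((1 + |q|) * U ^ (-(1:ℝ)/2) *
              (Real.log (Real.exp 1 + |q|) + Real.log U) ^ ((1:ℝ)/2) *
              Real.exp (-(Real.log (Real.exp 1 + |q|) + (1/2) * Real.log U)) +
            U ^ (-(1:ℝ)/2)) ∧
        |Real.sqrt (U / π) * (∫ x : ℝ, Real.exp (-U * (x - q) ^ 2) * f x) - f q| ≤
          C * U ^ (-(1:ℝ)/2) := by
  refine ⟨|C₂| / Real.sqrt π + 1, by positivity, ?_⟩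
  intro f hf hf1 hf2 U q hU
  have hU0 : (0:ℝ) < U := lt_of_lt_of_le (Real.exp_pos 2) hU
  have hLip : ∀ x : ℝ, |f x - f q| ≤ C₂ * |x - q| := by
    intro x
    have := convex_univ.norm_image_sub_le_of_norm_deriv_le (f := f)
      (fun t _ => (hf.differentiable (by simp)).differentiableAt)
      (fun t (_ : t ∈ (Set.univ : Set ℝ)) => hf2 t) (Set.mem_univ q) (Set.mem_univ x)
    simpa [Real.norm_eq_abs] using this
  have hC₂ : 0 ≤ C₂ := le_trans (abs_nonneg _) (hf2 0)
  have hCabs : |C₂| = C₂ := abs_of_nonneg hC₂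
  -- integrability facts
  have hg : Integrable (fun x : ℝ => Real.exp (-U * (x - q) ^ 2)) :=
    (integrable_exp_neg_mul_sq hU0).comp_sub_right q
  have hh : Integrable (fun x : ℝ => |x - q| * Real.exp (-U * (x - q) ^ 2)) := by
    have := ((integrable_mul_exp_neg_mul_sq hU0).abs).comp_sub_right q
    refine this.congr (Filter.Eventually.of_forall fun x => ?_)
    simp [abs_mul, abs_of_pos (Real.exp_pos _)]
  have hgf : Integrable (fun x : ℝ => Real.exp (-U * (x - q) ^ 2) * f x) := by
    refine Integrable.mono' ((hg.const_mul |f q|).add (hh.const_mul C₂)) ?_ ?_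
    · exact (Continuous.mul (by continuity) (hf.continuous)).aestronglyMeasurable
    · refine Filter.Eventually.of_forall fun x => ?_
      have h1 : |f x| ≤ |f q| + C₂ * |x - q| := by
        have := hLip x
        have h2 : |f x| - |f q| ≤ |f x - f q| := abs_sub_abs_le_abs_sub _ _
        linarith
      have he : (0:ℝ) < Real.exp (-U * (x - q) ^ 2) := Real.exp_pos _
      rw [Real.norm_eq_abs, abs_mul, abs_of_pos he]
      calc Real.exp (-U * (x - q) ^ 2) * |f x|
          ≤ Real.exp (-U * (x - q) ^ 2) * (|f q| + C₂ * |x - q|) := by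
            exact mul_le_mul_of_nonneg_left h1 he.le
        _ = |f q| * Real.exp (-U * (x - q) ^ 2)
            + C₂ * (|x - q| * Real.exp (-U * (x - q) ^ 2)) := by ring
  -- value of the plain Gaussian integral
  have hgauss : ∫ x : ℝ, Real.exp (-U * (x - q) ^ 2) = Real.sqrt (π / U) := by
    rw [integral_sub_right_eq_self (fun x : ℝ => Real.exp (-U * x ^ 2)) q]
    exact integral_gaussian U
  have hπ : (0:ℝ) < π := Real.pi_pos
  have hnorm : Real.sqrt (U / π) * Real.sqrt (π / U) = 1 := by
    rw [← Real.sqrt_mul (by positivity) (π / U)]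
    rw [show U / π * (π / U) = 1 by field_simp]
    exact Real.sqrt_one
  -- rewrite the difference
  have key : Real.sqrt (U / π) * (∫ x : ℝ, Real.exp (-U * (x - q) ^ 2) * f x) - f q
      = Real.sqrt (U / π) * ∫ x : ℝ, Real.exp (-U * (x - q) ^ 2) * (f x - f q) := by
    have : (∫ x : ℝ, Real.exp (-U * (x - q) ^ 2) * (f x - f q))
        = (∫ x : ℝ, Real.exp (-U * (x - q) ^ 2) * f x)
          - (∫ x : ℝ, Real.exp (-U * (x - q) ^ 2)) * f q := by
      rw [← integral_mul_const]
      rw [← integral_sub hgf (hg.mul_const (f q))]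
      congr 1; ext x; ring
    rw [this, hgauss]
    have : Real.sqrt (U / π) * Real.sqrt (π / U) * f q = f q := by rw [hnorm, one_mul]
    rw [mul_sub]
    rw [show Real.sqrt (U / π) * (Real.sqrt (π / U) * f q)
        = Real.sqrt (U / π) * Real.sqrt (π / U) * f q by ring, hnorm, one_mul]
  -- main bound
  have hbound : |Real.sqrt (U / π) * (∫ x : ℝ, Real.exp (-U * (x - q) ^ 2) * f x) - f q|
      ≤ Real.sqrt (U / π) * (C₂ * U⁻¹) := by
    rw [key, abs_mul, abs_of_nonneg (Real.sqrt_nonneg _)]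
    refine mul_le_mul_of_nonneg_left ?_ (Real.sqrt_nonneg _)
    have habs : |∫ x : ℝ, Real.exp (-U * (x - q) ^ 2) * (f x - f q)|
        ≤ ∫ x : ℝ, |Real.exp (-U * (x - q) ^ 2) * (f x - f q)| := by
      have h := norm_integral_le_integral_norm (μ := volume)
        (fun x : ℝ => Real.exp (-U * (x - q) ^ 2) * (f x - f q))
      simpa only [Real.norm_eq_abs] using h
    refine le_trans habs ?_
    have hint : ∫ x : ℝ, |Real.exp (-U * (x - q) ^ 2) * (f x - f q)|
        ≤ ∫ x : ℝ, C₂ * (|x - q| * Real.exp (-U * (x - q) ^ 2)) := by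
      refine integral_mono ((hgf.sub (hg.mul_const (f q))).congr
        (Filter.Eventually.of_forall fun x => by simp only [Pi.sub_apply]; ring)).abs
        (hh.const_mul C₂) ?_
      intro x
      dsimp only
      rw [abs_mul, abs_of_pos (Real.exp_pos _)]
      calc Real.exp (-U * (x - q) ^ 2) * |f x - f q|
          ≤ Real.exp (-U * (x - q) ^ 2) * (C₂ * |x - q|) :=
            mul_le_mul_of_nonneg_left (hLip x) (Real.exp_pos _).le
        _ = C₂ * (|x - q| * Real.exp (-U * (x - q) ^ 2)) := by ring
    refine le_trans hint ?_
    rw [integral_const_mul]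
    have : (∫ x : ℝ, |x - q| * Real.exp (-U * (x - q) ^ 2)) = U⁻¹ := by
      rw [integral_sub_right_eq_self (fun x : ℝ => |x| * Real.exp (-U * x ^ 2)) q]
      exact gauss_abs U hU0
    rw [this]
  -- simplify the bound value
  have hval : Real.sqrt (U / π) * (C₂ * U⁻¹) ≤ (|C₂| / Real.sqrt π + 1) * U ^ (-(1:ℝ)/2) := by
    have hsU : Real.sqrt (U / π) = Real.sqrt U / Real.sqrt π := Real.sqrt_div' U hπ.le ▸ by
      rw [Real.sqrt_div hU0.le]
    have hrpow : U ^ (-(1:ℝ)/2) = (Real.sqrt U)⁻¹ := by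
      rw [show (-(1:ℝ)/2) = -(1/2) by norm_num, Real.rpow_neg hU0.le,
        ← Real.sqrt_eq_rpow]
    rw [hsU, hrpow]
    have hsU0 : 0 < Real.sqrt U := Real.sqrt_pos.2 hU0
    rw [hCabs]
    have h1 : Real.sqrt U / Real.sqrt π * (C₂ * U⁻¹) = C₂ / Real.sqrt π * (Real.sqrt U / U) := by
      ring
    have h2 : Real.sqrt U / U = (Real.sqrt U)⁻¹ := by
      rw [← Real.sqrt_mul_self hU0.le]
      field_simp
      rw [Real.sq_sqrt (Real.sqrt_nonneg _)]
    rw [h1, h2]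
    have : (0:ℝ) < (Real.sqrt U)⁻¹ := by positivity
    nlinarith [Real.sqrt_nonneg π, div_nonneg hC₂ (Real.sqrt_nonneg π)]
  have hmain : |Real.sqrt (U / π) * (∫ x : ℝ, Real.exp (-U * (x - q) ^ 2) * f x) - f q|
      ≤ (|C₂| / Real.sqrt π + 1) * U ^ (-(1:ℝ)/2) := le_trans hbound hval
  refine ⟨?_, hmain⟩
  refine le_trans hmain ?_
  have hA : 0 ≤ (1 + |q|) * U ^ (-(1:ℝ)/2) *
      (Real.log (Real.exp 1 + |q|) + Real.log U) ^ ((1:ℝ)/2) *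
      Real.exp (-(Real.log (Real.exp 1 + |q|) + (1/2) * Real.log U)) := by
    have hlog1 : (0:ℝ) ≤ Real.log (Real.exp 1 + |q|) := by
      refine Real.log_nonneg ?_
      nlinarith [abs_nonneg q, Real.add_one_le_exp (1:ℝ)]
    have hlog2 : (0:ℝ) ≤ Real.log U := by
      refine Real.log_nonneg ?_
      calc (1:ℝ) ≤ Real.exp 2 := by
            nlinarith [Real.add_one_le_exp (2:ℝ)]
        _ ≤ U := hU
    have h3 : (0:ℝ) ≤ (Real.log (Real.exp 1 + |q|) + Real.log U) ^ ((1:ℝ)/2) :=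
      Real.rpow_nonneg (by linarith) _
    have h4 : (0:ℝ) ≤ U ^ (-(1:ℝ)/2) := Real.rpow_nonneg hU0.le _
    positivity
  nlinarith [mul_nonneg (by positivity : (0:ℝ) ≤ |C₂| / Real.sqrt π + 1) hA]
end

section
/- Let U ≥ 1, α ≥ U^{-1/2}, and ν ≥ 1 + α. Then (U/π)^{1/2} ∫_{|x-ν| ≤ α, x ≥ 1} (e^{-U(x-ν)²} + e^{-U(x+ν)²}) dx = 1 + O(e^{-Uα²}/(α√U)), and (U/π)^{1/2} ∫_{x ≥ 1, |x-ν| ≥ α} (e^{-U(x-ν)²} + e^{-U(x+ν)²}) dx = O(e^{-Uα²}/(α√U)), with absolute implied constants. -/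
/-!
On the window `|x - ν| ≤ α` the main peak `e^{-U(x-ν)²}` carries its whole Gaussian mass
`(π/U)^{1/2}` except for its two tails, while every point `x ≥ 1` lies at distance `≥ α` from the
reflected peak at `-ν`. So both estimates reduce to the tail bound
`∫_{|x-m| ≥ a} e^{-U(x-m)²} dx ≤ e^{-Ua²}/(Ua)`, obtained from `1 ≤ |x - m|/a` on the tails.
-/

open MeasureTheory Real Set Filter

lemma integral_Ioi_mul_exp_neg_mul_sq {U : ℝ} (hU : 0 < U) (a : ℝ) :
    ∫ x in Ioi a, x * exp (-U * x ^ 2) = exp (-U * a ^ 2) / (2 * U) := by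
  have hderiv : ∀ x ∈ Ioi a,
      HasDerivAt (fun y => -exp (-U * y ^ 2) / (2 * U)) (x * exp (-U * x ^ 2)) x := by
    intro x _
    refine ((((hasDerivAt_pow 2 x).const_mul (-U)).exp.neg).div_const (2 * U)).congr_deriv ?_
    field_simp
    ring
  have hlim : Tendsto (fun y => -exp (-U * y ^ 2) / (2 * U)) atTop (nhds 0) := by
    have h := ((tendsto_exp_atBot.comp ((tendsto_pow_atTop two_ne_zero).const_mul_atTop_of_neg
      (neg_neg_of_pos hU))).neg).div_const (2 * U)
    simpa using h
  rw [integral_Ioi_of_hasDerivAt_of_tendsto (by fun_prop) hderiv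
    (integrable_mul_exp_neg_mul_sq hU).integrableOn hlim]
  ring

lemma integral_Ioi_exp_neg_mul_sq_le {U a : ℝ} (hU : 0 < U) (ha : 0 < a) :
    ∫ x in Ioi a, exp (-U * x ^ 2) ≤ exp (-U * a ^ 2) / (2 * U * a) := by
  calc ∫ x in Ioi a, exp (-U * x ^ 2)
      ≤ ∫ x in Ioi a, a⁻¹ * (x * exp (-U * x ^ 2)) := by
        refine setIntegral_mono_on (integrable_exp_neg_mul_sq hU).integrableOn
          ((integrable_mul_exp_neg_mul_sq hU).integrableOn.const_mul _) measurableSet_Ioi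
          fun x hx => ?_
        rw [← mul_assoc]
        exact le_mul_of_one_le_left (exp_pos _).le ((one_le_inv_mul₀ ha).mpr (le_of_lt hx))
    _ = exp (-U * a ^ 2) / (2 * U * a) := by
        rw [integral_const_mul, integral_Ioi_mul_exp_neg_mul_sq hU]
        field_simp

lemma setIntegral_exp_neg_mul_sq_le {U a : ℝ} (hU : 0 < U) (ha : 0 < a) {S : Set ℝ}
    (h : ∀ x ∈ S, a ≤ |x|) :
    ∫ x in S, exp (-U * x ^ 2) ≤ exp (-U * a ^ 2) / (U * a) := by
  have hint : Integrable (fun x : ℝ => exp (-U * x ^ 2)) := integrable_exp_neg_mul_sq hU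
  have hsub : S ⊆ Iic (-a) ∪ Ici a := fun x hx => by
    rcases le_abs'.mp (h x hx) with h' | h'
    exacts [Or.inl h', Or.inr h']
  have hleft : ∫ x in Iic (-a), exp (-U * x ^ 2) = ∫ x in Ioi a, exp (-U * x ^ 2) := by
    rw [← neg_neg a, ← integral_comp_neg_Iic, neg_neg]
    simp
  calc ∫ x in S, exp (-U * x ^ 2)
      ≤ ∫ x in Iic (-a) ∪ Ici a, exp (-U * x ^ 2) :=
        setIntegral_mono_set hint.integrableOn (.of_forall fun _ => (exp_pos _).le)
          hsub.eventuallyLE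
    _ = 2 * ∫ x in Ioi a, exp (-U * x ^ 2) := by
        rw [setIntegral_union (Iic_disjoint_Ici.mpr (by linarith)) measurableSet_Ici
          hint.integrableOn hint.integrableOn, hleft, integral_Ici_eq_integral_Ioi]
        ring
    _ ≤ 2 * (exp (-U * a ^ 2) / (2 * U * a)) := by
        gcongr
        exact integral_Ioi_exp_neg_mul_sq_le hU ha
    _ = exp (-U * a ^ 2) / (U * a) := by field_simp

lemma setIntegral_exp_neg_mul_sq_sub_le {U a m : ℝ} (hU : 0 < U) (ha : 0 < a) {S : Set ℝ}
    (h : ∀ x ∈ S, a ≤ |x - m|) :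
    ∫ x in S, exp (-U * (x - m) ^ 2) ≤ exp (-U * a ^ 2) / (U * a) := by
  have htrans := (measurePreserving_sub_right volume m).setIntegral_preimage_emb
    (Homeomorph.subRight m).measurableEmbedding (fun y => exp (-U * y ^ 2)) ((· + m) ⁻¹' S)
  have hpre : (· - m) ⁻¹' ((· + m) ⁻¹' S) = S := by ext; simp
  rw [hpre] at htrans
  rw [htrans]
  exact setIntegral_exp_neg_mul_sq_le hU ha fun y hy => by simpa using h (y + m) hy

lemma sqrt_div_pi_mul_integral_exp_neg_mul_sq_sub {U : ℝ} (hU : 0 < U) (m : ℝ) :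
    sqrt (U / π) * ∫ x, exp (-U * (x - m) ^ 2) = 1 := by
  rw [integral_sub_right_eq_self (fun x => exp (-U * x ^ 2)), integral_gaussian,
    ← sqrt_mul (by positivity), div_mul_div_comm, mul_comm U, div_self (by positivity), sqrt_one]

lemma sqrt_div_pi_mul_setIntegral_exp_neg_mul_sq_sub_le {U a m : ℝ} (hU : 0 < U) (ha : 0 < a)
    {S : Set ℝ} (h : ∀ x ∈ S, a ≤ |x - m|) :
    sqrt (U / π) * ∫ x in S, exp (-U * (x - m) ^ 2) ≤ exp (-U * a ^ 2) / (a * sqrt U) := by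
  have hπ : sqrt (U / π) ≤ sqrt U :=
    sqrt_le_sqrt (div_le_self hU.le (by linarith [pi_gt_three]))
  calc sqrt (U / π) * ∫ x in S, exp (-U * (x - m) ^ 2)
      ≤ sqrt U * (exp (-U * a ^ 2) / (U * a)) := by
        gcongr
        exact setIntegral_exp_neg_mul_sq_sub_le hU ha h
    _ = exp (-U * a ^ 2) / (a * sqrt U) := by
        have hs : sqrt U ^ 2 = U := sq_sqrt hU.le
        field_simp
        rw [hs]

lemma sqrt_div_pi_mul_setIntegral_exp_neg_mul_sq_add_le {U a m : ℝ} (hU : 0 < U) (ha : 0 < a)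
    {S : Set ℝ} (h : ∀ x ∈ S, a ≤ x + m) :
    sqrt (U / π) * ∫ x in S, exp (-U * (x + m) ^ 2) ≤ exp (-U * a ^ 2) / (a * sqrt U) := by
  simpa using sqrt_div_pi_mul_setIntegral_exp_neg_mul_sq_sub_le hU ha (m := -m)
    fun x hx => (h x hx).trans (by simpa using le_abs_self (x + m))

section LocalComparison

variable {U α ν : ℝ} (hU : 0 < U) (hα : 0 < α) (hν : 1 + α ≤ ν)
include hU hα hν

lemma abs_sqrt_div_pi_mul_integral_near_sub_one_le :
    |sqrt (U / π) * (∫ x in {x : ℝ | 1 ≤ x ∧ |x - ν| ≤ α},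
        (exp (-U * (x - ν) ^ 2) + exp (-U * (x + ν) ^ 2))) - 1|
      ≤ exp (-U * α ^ 2) / (α * sqrt U) := by
  have hf : Integrable fun x => exp (-U * (x - ν) ^ 2) :=
    (integrable_exp_neg_mul_sq hU).comp_sub_right ν
  have hg : Integrable fun x => exp (-U * (x + ν) ^ 2) :=
    (integrable_exp_neg_mul_sq hU).comp_add_right ν
  have hwindow : {x : ℝ | 1 ≤ x ∧ |x - ν| ≤ α} = Icc (ν - α) (ν + α) := by
    ext x
    simp only [mem_ofPred_eq, mem_Icc, abs_le]
    exact ⟨fun ⟨_, h₁, h₂⟩ => ⟨by linarith, by linarith⟩,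
      fun ⟨h₁, h₂⟩ => ⟨by linarith, by linarith, by linarith⟩⟩
  have htails := sqrt_div_pi_mul_setIntegral_exp_neg_mul_sq_sub_le hU hα
    (S := (Icc (ν - α) (ν + α))ᶜ) fun x hx => by
      simp only [mem_compl_iff, mem_Icc, not_and_or, not_le] at hx
      rw [le_abs']
      rcases hx with hx | hx
      exacts [Or.inl (by linarith), Or.inr (by linarith)]
  have hreflected := sqrt_div_pi_mul_setIntegral_exp_neg_mul_sq_add_le hU hα (m := ν)
    (S := Icc (ν - α) (ν + α)) fun x hx => by linarith [hx.1]
  have hmass := sqrt_div_pi_mul_integral_exp_neg_mul_sq_sub hU ν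
  rw [← integral_add_compl (s := Icc (ν - α) (ν + α)) measurableSet_Icc hf, mul_add] at hmass
  have htails_nonneg :
      0 ≤ sqrt (U / π) * ∫ x in (Icc (ν - α) (ν + α))ᶜ, exp (-U * (x - ν) ^ 2) := by
    positivity
  have hreflected_nonneg :
      0 ≤ sqrt (U / π) * ∫ x in Icc (ν - α) (ν + α), exp (-U * (x + ν) ^ 2) := by
    positivity
  rw [hwindow, integral_add hf.integrableOn hg.integrableOn, mul_add, abs_le]
  constructor <;> linarith

lemma sqrt_div_pi_mul_integral_far_le :
    sqrt (U / π) * (∫ x in {x : ℝ | 1 ≤ x ∧ α ≤ |x - ν|},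
        (exp (-U * (x - ν) ^ 2) + exp (-U * (x + ν) ^ 2)))
      ≤ 2 * (exp (-U * α ^ 2) / (α * sqrt U)) := by
  have hf : Integrable fun x => exp (-U * (x - ν) ^ 2) :=
    (integrable_exp_neg_mul_sq hU).comp_sub_right ν
  have hg : Integrable fun x => exp (-U * (x + ν) ^ 2) :=
    (integrable_exp_neg_mul_sq hU).comp_add_right ν
  rw [integral_add hf.integrableOn hg.integrableOn, mul_add, two_mul]
  gcongr
  · exact sqrt_div_pi_mul_setIntegral_exp_neg_mul_sq_sub_le hU hα fun x hx => hx.2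
  · exact sqrt_div_pi_mul_setIntegral_exp_neg_mul_sq_add_le hU hα fun x hx => by
      linarith [hx.1]

end LocalComparison

theorem stmt4 :
    ∃ C > (0:ℝ), ∀ U α ν : ℝ, 1 ≤ U → U ^ (-(1:ℝ)/2) ≤ α → 1 + α ≤ ν →
      |Real.sqrt (U / π) *
          (∫ x in {x : ℝ | 1 ≤ x ∧ |x - ν| ≤ α},
            (Real.exp (-U * (x - ν) ^ 2) + Real.exp (-U * (x + ν) ^ 2))) - 1|
        ≤ C * Real.exp (-U * α ^ 2) / (α * Real.sqrt U) ∧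
      Real.sqrt (U / π) *
          (∫ x in {x : ℝ | 1 ≤ x ∧ α ≤ |x - ν|},
            (Real.exp (-U * (x - ν) ^ 2) + Real.exp (-U * (x + ν) ^ 2)))
        ≤ C * Real.exp (-U * α ^ 2) / (α * Real.sqrt U) := by
  refine ⟨2, two_pos, fun U α ν hU hα hν => ?_⟩
  have hU0 : 0 < U := one_pos.trans_le hU
  have hα0 : 0 < α := (rpow_pos_of_pos hU0 _).trans_le hα
  have hK : 0 ≤ exp (-U * α ^ 2) / (α * sqrt U) := by positivity
  rw [mul_div_assoc]
  exact ⟨(abs_sqrt_div_pi_mul_integral_near_sub_one_le hU0 hα0 hν).trans (by linarith),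
    sqrt_div_pi_mul_integral_far_le hU0 hα0 hν⟩
end

section
/- Let n ≥ 1 and ε ∈ (0, e^{-1}]. Suppose D₀, D₁, D₂, ... are measurable subsets of ℝ^n such that D_{k+1} ⊆ ⋃_v T_v D_k, where the union is over the 3^n translation vectors v with coordinates in {0, ε, -ε} and T_v is translation by v. Let p : ℝ^n → [1,∞) be defined by p(x) = Π_j max(1, |x_j|). Then for all k ≥ 0, ∫_{D_k} p(x) dx ≤ R^k ∫_{D₀} p(x) dx, where R = (3(1+e^{-1}))^n. -/
open MeasureTheory Real
open scoped ENNReal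

/-!
Shifting a coordinate by at most `b` multiplies `max 1 |x j|` by at most `1 + b`, so a translate
by a vector of `{0, ±ε}ⁿ` raises the weight `∏ j, max 1 |x j|` by at most `(1 + e⁻¹)ⁿ` pointwise.
By translation invariance of Lebesgue measure, each of the `3ⁿ` translates of `D k` thus carries
at most `(1 + e⁻¹)ⁿ` times the weighted mass of `D k`, and a union bound gives one factor `R`
per step.
-/

lemma max_one_abs_add_le {a t b : ℝ} (ht : |t| ≤ b) :
    max 1 |a + t| ≤ (1 + b) * max 1 |a| := by
  have hb : 0 ≤ b := (abs_nonneg t).trans ht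
  have h1 : 1 ≤ max 1 |a| := le_max_left _ _
  have h2 : |a| ≤ max 1 |a| := le_max_right _ _
  apply max_le
  · nlinarith
  · nlinarith [abs_add_le a t]

lemma prod_max_one_abs_add_le {ι : Type*} [Fintype ι] {x v : ι → ℝ} {b : ℝ}
    (hv : ∀ j, |v j| ≤ b) :
    ∏ j, max 1 |(x + v) j| ≤ (1 + b) ^ Fintype.card ι * ∏ j, max 1 |x j| := by
  calc ∏ j, max 1 |(x + v) j| ≤ ∏ j, (1 + b) * max 1 |x j| :=
        Finset.prod_le_prod (fun j _ => by positivity) fun j _ => max_one_abs_add_le (hv j)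
    _ = (1 + b) ^ Fintype.card ι * ∏ j, max 1 |x j| := by
        rw [Finset.prod_mul_distrib, Finset.prod_const, Finset.card_univ]

lemma setLIntegral_image_add_right_le {G : Type*} [MeasurableSpace G] [AddGroup G]
    [MeasurableAdd G] (μ : Measure G) [μ.IsAddRightInvariant] {f : G → ℝ≥0∞} {c : ℝ≥0∞}
    (hc : c ≠ ∞) {v : G} (hf : ∀ x, f (x + v) ≤ c * f x) (s : Set G) :
    ∫⁻ x in (· + v) '' s, f x ∂μ ≤ c * ∫⁻ x in s, f x ∂μ := by
  rw [← (measurePreserving_add_right μ v).setLIntegral_comp_emb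
    (MeasurableEquiv.addRight v).measurableEmbedding, ← lintegral_const_mul' c _ hc]
  exact lintegral_mono fun x => hf x

lemma setLIntegral_le_sum_of_subset_biUnion {α ι : Type*} [MeasurableSpace α] {μ : Measure α}
    [SFinite μ] {t : Set α} {S : Finset ι} {A : ι → Set α} (h : t ⊆ ⋃ i ∈ S, A i)
    (f : α → ℝ≥0∞) :
    ∫⁻ x in t, f x ∂μ ≤ ∑ i ∈ S, ∫⁻ x in A i, f x ∂μ := by
  simp only [← withDensity_apply' f]
  exact (measure_mono h).trans (measure_biUnion_finset_le S A)

lemma setLIntegral_prod_max_one_abs_le_of_subset_biUnion {ι : Type*} [Fintype ι] {b : ℝ}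
    {S : Finset (ι → ℝ)} (hS : ∀ v ∈ S, ∀ j, |v j| ≤ b) {D D' : Set (ι → ℝ)}
    (h : D' ⊆ ⋃ v ∈ S, (· + v) '' D) :
    ∫⁻ x in D', ENNReal.ofReal (∏ j, max 1 |x j|) ≤
      S.card * ENNReal.ofReal ((1 + b) ^ Fintype.card ι) *
        ∫⁻ x in D, ENNReal.ofReal (∏ j, max 1 |x j|) := by
  have htranslate : ∀ v ∈ S, ∫⁻ x in (· + v) '' D, ENNReal.ofReal (∏ j, max 1 |x j|) ≤
      ENNReal.ofReal ((1 + b) ^ Fintype.card ι) * ∫⁻ x in D, ENNReal.ofReal (∏ j, max 1 |x j|) :=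
    fun v hv => setLIntegral_image_add_right_le volume ENNReal.ofReal_ne_top (fun x => by
      rw [← ENNReal.ofReal_mul' (by positivity)]
      exact ENNReal.ofReal_le_ofReal (prod_max_one_abs_add_le (hS v hv))) D
  calc _ ≤ ∑ v ∈ S, ∫⁻ x in (· + v) '' D, ENNReal.ofReal (∏ j, max 1 |x j|) :=
        setLIntegral_le_sum_of_subset_biUnion h _
    _ ≤ _ := by
        rw [mul_assoc, ← nsmul_eq_mul, ← Finset.sum_const]
        exact Finset.sum_le_sum htranslate

lemma le_pow_mul_of_le_mul {M : Type*} [Monoid M] [Preorder M] [MulLeftMono M] {u : ℕ → M}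
    {c : M} (h : ∀ k, u (k + 1) ≤ c * u k) : ∀ k, u k ≤ c ^ k * u 0
  | 0 => by rw [pow_zero, one_mul]
  | k + 1 => (h k).trans <| by
      rw [pow_succ', mul_assoc]
      exact mul_le_mul_right (le_pow_mul_of_le_mul h k) c

theorem stmt15_general (n : ℕ) (ε : ℝ) (hε : 0 < ε) (hε1 : ε ≤ (Real.exp 1)⁻¹)
    (D : ℕ → Set (Fin n → ℝ))
    (hsub : ∀ k, D (k + 1) ⊆
      ⋃ v ∈ {v : Fin n → ℝ | ∀ j, v j = 0 ∨ v j = ε ∨ v j = -ε},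
        (fun x => x + v) '' D k) :
    ∀ k, (∫⁻ x in D k, ENNReal.ofReal (∏ j, max 1 |x j|)) ≤
      ENNReal.ofReal ((3 * (1 + (Real.exp 1)⁻¹)) ^ n) ^ k *
        ∫⁻ x in D 0, ENNReal.ofReal (∏ j, max 1 |x j|) := by
  set S := Fintype.piFinset fun _ : Fin n => ({0, ε, -ε} : Finset ℝ)
  have hS_eq : {v : Fin n → ℝ | ∀ j, v j = 0 ∨ v j = ε ∨ v j = -ε} = ↑S := by
    ext v; simp [S]
  have hS_small : ∀ v ∈ S, ∀ j, |v j| ≤ (Real.exp 1)⁻¹ := by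
    intro v hv j
    have hvj : v j = 0 ∨ v j = ε ∨ v j = -ε := by simpa using Fintype.mem_piFinset.1 hv j
    rcases hvj with h | h | h <;> simp [h, abs_of_pos hε, hε1, hε.le.trans hε1]
  have hS_card : (S.card : ℝ≥0∞) * ENNReal.ofReal ((1 + (Real.exp 1)⁻¹) ^ n) ≤
      ENNReal.ofReal ((3 * (1 + (Real.exp 1)⁻¹)) ^ n) := by
    rw [mul_pow, ENNReal.ofReal_mul (by positivity), ← Nat.cast_ofNat, ← Nat.cast_pow,
      ENNReal.ofReal_natCast, Fintype.card_piFinset_const]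
    gcongr
    exact Finset.card_le_three
  refine le_pow_mul_of_le_mul fun k => ?_
  have hcover : D (k + 1) ⊆ ⋃ v ∈ S, (· + v) '' D k := by
    simpa only [hS_eq, Finset.mem_coe] using hsub k
  calc _ ≤ _ := setLIntegral_prod_max_one_abs_le_of_subset_biUnion hS_small hcover
    _ ≤ _ := by rw [Fintype.card_fin]; gcongr

theorem stmt15 (n : ℕ) (hn : 1 ≤ n) (ε : ℝ) (hε : 0 < ε) (hε1 : ε ≤ (Real.exp 1)⁻¹)
    (D : ℕ → Set (Fin n → ℝ)) (hD : ∀ k, MeasurableSet (D k))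
    (hsub : ∀ k, D (k + 1) ⊆
      ⋃ v ∈ {v : Fin n → ℝ | ∀ j, v j = 0 ∨ v j = ε ∨ v j = -ε},
        (fun x => x + v) '' D k) :
    ∀ k, (∫⁻ x in D k, ENNReal.ofReal (∏ j, max 1 |x j|)) ≤
      ENNReal.ofReal ((3 * (1 + (Real.exp 1)⁻¹)) ^ n) ^ k *
        ∫⁻ x in D 0, ENNReal.ofReal (∏ j, max 1 |x j|) :=
  stmt15_general n ε hε hε1 D hsub
end
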